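/- Let C be a pointed, spanning polyhedral cone in E = ℝⁿ and let τ ⊆ σ be faces of C. For any a, a' ∈ E with a − a' ∈ span_ℝ τ, the coprincipal downsets agree: a + τ − σ° − C = a' + τ − σ° − C. Consequently the set a + τ − σ° − C depends only on the coset a + span_ℝ τ. -/

import Mathlib

open Pointwise

/-- A polyhedral cone in `ℝⁿ`: an intersection of finitely many closed linear half-spaces. -/
def IsPolyCone {n : ℕ} (C : Set (Fin n → ℝ)) : Prop :=
  ∃ (m : ℕ) (ℓ : Fin m → ((Fin n → ℝ) →ₗ[ℝ] ℝ)), C = {x | ∀ i, 0 ≤ ℓ i x}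

/-- A face of a cone `C`: a subset of `C` containing `0`, closed under addition, and such
that whenever `x, y ∈ C` and `x + y` lies in the subset, both `x` and `y` do. -/
def IsConeFace {M : Type*} [AddCommMonoid M] (σ C : Set M) : Prop :=
  σ ⊆ C ∧ (0 : M) ∈ σ ∧ (∀ x ∈ σ, ∀ y ∈ σ, x + y ∈ σ) ∧
    ∀ x ∈ C, ∀ y ∈ C, x + y ∈ σ → x ∈ σ ∧ y ∈ σ

/-- A downset for the partial order `x ≼ y ↔ y - x ∈ C`. -/
def IsDownset {n : ℕ} (C D : Set (Fin n → ℝ)) : Prop :=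
  ∀ x y : Fin n → ℝ, y ∈ D → y - x ∈ C → x ∈ D

/-- The upper boundary downset `D^σ = {a | a - σ° ⊆ D}`. -/
def upSet {n : ℕ} (D σ : Set (Fin n → ℝ)) : Set (Fin n → ℝ) :=
  {a | ∀ s ∈ intrinsicInterior ℝ σ, a - s ∈ D}

/-- `a` is a cogenerator of the downset `D` along the face `τ` with nadir `σ`:
`(a + C) ∩ D^σ = a + τ` and no face `σ''` with `τ ⊆ σ'' ⊊ σ` satisfies `a - σ''° ⊆ D`. -/
def IsCogen {n : ℕ} (C D τ σ : Set (Fin n → ℝ)) (a : Fin n → ℝ) : Prop :=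
  (({a} + C) ∩ upSet D σ = {a} + τ) ∧
  ∀ σ'' : Set (Fin n → ℝ), IsConeFace σ'' C → τ ⊆ σ'' → σ'' ⊂ σ →
    ¬ (∀ s ∈ intrinsicInterior ℝ σ'', a - s ∈ D)

/-- A `σ`-vicinity of a point `p` of `E ⧸ span τ`: the image under the quotient map of
`u + σ° + C` for some `u` admitting a representative `w` of `p` with `w - u ∈ σ°`. -/
def IsVic {n : ℕ} (C σ τ : Set (Fin n → ℝ))
    (p : (Fin n → ℝ) ⧸ Submodule.span ℝ τ)
    (V : Set ((Fin n → ℝ) ⧸ Submodule.span ℝ τ)) : Prop :=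
  ∃ u w : Fin n → ℝ, (Submodule.span ℝ τ).mkQ w = p ∧
    w - u ∈ intrinsicInterior ℝ σ ∧
    V = (Submodule.span ℝ τ).mkQ '' ({u} + intrinsicInterior ℝ σ + C)

/-!
Since `τ` lies in `C` and is closed under addition, the set `τ - C` is stable under adding
an element of `τ` (absorb it into `τ`) and under subtracting one (absorb it into `C`).
Hence `a + τ - σ° - C` is unchanged when `a` moves by an element of `τ - τ`, and `τ - τ` is the
whole of `span τ` because a face of a convex cone is itself a convex cone.
-/

section Translation

variable {G : Type*} [AddCommGroup G]

theorem singleton_add_sub_sub_subset_of_add_sub {T K : AddSubmonoid G} (hTK : T ≤ K) (S : Set G)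
    (b : G) {t₁ t₂ : G} (ht₁ : t₁ ∈ T) (ht₂ : t₂ ∈ T) :
    {b + (t₁ - t₂)} + (T : Set G) - S - K ⊆ {b} + (T : Set G) - S - K := by
  rintro _ ⟨_, ⟨_, ⟨_, rfl, t, ht, rfl⟩, s, hs, rfl⟩, c, hc, rfl⟩
  refine ⟨_, ⟨_, ⟨b, rfl, t₁ + t, T.add_mem ht₁ ht, rfl⟩, s, hs, rfl⟩,
    c + t₂, K.add_mem hc (hTK ht₂), ?_⟩
  show b + (t₁ + t) - s - (c + t₂) = b + (t₁ - t₂) + t - s - c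
  abel

theorem singleton_add_sub_sub_eq_of_sub_eq {T K : AddSubmonoid G} (hTK : T ≤ K) (S : Set G)
    {b b' t₁ t₂ : G} (ht₁ : t₁ ∈ T) (ht₂ : t₂ ∈ T) (h : b - b' = t₁ - t₂) :
    {b} + (T : Set G) - S - K = {b'} + (T : Set G) - S - K := by
  have hb : b = b' + (t₁ - t₂) := by rw [← h]; abel
  have hb' : b' = b + (t₂ - t₁) := by rw [hb]; abel
  refine Set.Subset.antisymm ?_ ?_
  · rw [hb]; exact singleton_add_sub_sub_subset_of_add_sub hTK S b' ht₁ ht₂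
  · rw [hb']; exact singleton_add_sub_sub_subset_of_add_sub hTK S b ht₂ ht₁

end Translation

theorem IsConeFace.nsmul_mem {M : Type*} [AddCommMonoid M] {τ C : Set M}
    (hτ : IsConeFace τ C) {t : M} (ht : t ∈ τ) : ∀ k : ℕ, k • t ∈ τ
  | 0 => by simpa only [zero_smul] using hτ.2.1
  | k + 1 => by simpa only [succ_nsmul] using hτ.2.2.1 _ (hτ.nsmul_mem ht k) _ ht

section Cones

variable {𝕜 E : Type*} [Ring 𝕜] [LinearOrder 𝕜] [IsOrderedRing 𝕜] [AddCommGroup E]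
  [Module 𝕜 E]

theorem PointedCone.mem_span_iff_exists_sub {K : PointedCone 𝕜 E} {v : E} :
    v ∈ Submodule.span 𝕜 (K : Set E) ↔ ∃ x ∈ K, ∃ y ∈ K, x - y = v := by
  refine ⟨fun hv => ?_, fun ⟨x, hx, y, hy, hxy⟩ =>
    hxy ▸ sub_mem (Submodule.subset_span hx) (Submodule.subset_span hy)⟩
  induction hv using Submodule.span_induction with
  | mem x hx => exact ⟨x, hx, 0, K.zero_mem, sub_zero x⟩
  | zero => exact ⟨0, K.zero_mem, 0, K.zero_mem, sub_zero 0⟩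
  | add _ _ _ _ ihx ihy =>
    obtain ⟨x₁, hx₁, y₁, hy₁, rfl⟩ := ihx
    obtain ⟨x₂, hx₂, y₂, hy₂, rfl⟩ := ihy
    exact ⟨x₁ + x₂, K.add_mem hx₁ hx₂, y₁ + y₂, K.add_mem hy₁ hy₂, by abel⟩
  | smul c _ _ ih =>
    obtain ⟨x, hx, y, hy, rfl⟩ := ih
    rcases le_total 0 c with hc | hc
    · exact ⟨c • x, K.smul_mem hc hx, c • y, K.smul_mem hc hy, (smul_sub c x y).symm⟩
    · refine ⟨(-c) • y, K.smul_mem (neg_nonneg.2 hc) hy,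
        (-c) • x, K.smul_mem (neg_nonneg.2 hc) hx, ?_⟩
      rw [smul_sub, neg_smul, neg_smul]
      abel

variable [Archimedean 𝕜] {K : PointedCone 𝕜 E} {τ : Set E}


/-- Choosing a natural number `k ≥ c`, the face element `k • t` splits into the cone elements
`c • t` and `(k - c) • t`. -/
theorem IsConeFace.smul_mem (hτ : IsConeFace τ (K : Set E)) {c : 𝕜} (hc : 0 ≤ c) {t : E}
    (ht : t ∈ τ) : c • t ∈ τ := by
  obtain ⟨k, hk⟩ := exists_nat_ge c
  have htK : t ∈ K := hτ.1 ht
  have hsum : c • t + ((k : 𝕜) - c) • t ∈ τ := by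
    rw [← add_smul, add_sub_cancel, Nat.cast_smul_eq_nsmul]
    exact hτ.nsmul_mem ht k
  exact (hτ.2.2.2 _ (K.smul_mem hc htK) _ (K.smul_mem (sub_nonneg.2 hk) htK) hsum).1

def IsConeFace.toPointedCone (hτ : IsConeFace τ (K : Set E)) : PointedCone 𝕜 E where
  carrier := τ
  add_mem' ha hb := hτ.2.2.1 _ ha _ hb
  zero_mem' := hτ.2.1
  smul_mem' c _ ht := hτ.smul_mem c.2 ht

@[simp]
theorem IsConeFace.coe_toPointedCone (hτ : IsConeFace τ (K : Set E)) :
    (hτ.toPointedCone : Set E) = τ :=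
  rfl

end Cones

theorem IsPolyCone.exists_pointedCone {n : ℕ} {C : Set (Fin n → ℝ)} (hC : IsPolyCone C) :
    ∃ K : PointedCone ℝ (Fin n → ℝ), (K : Set (Fin n → ℝ)) = C := by
  obtain ⟨m, ℓ, rfl⟩ := hC
  refine ⟨{ carrier := {x | ∀ i, 0 ≤ ℓ i x}
            add_mem' := fun hx hy i => ?_
            zero_mem' := fun i => by simp only [map_zero, le_refl]
            smul_mem' := fun c x hx i => ?_ }, rfl⟩
  · rw [map_add]; exact add_nonneg (hx i) (hy i)
  · rw [← Nonneg.coe_smul, map_smul]; exact smul_nonneg c.2 (hx i)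

theorem coprincipal_well_defined_general {n : ℕ} (C τ σ : Set (Fin n → ℝ))
    (hC : IsPolyCone C)
    (hτ : IsConeFace τ C)
    (a a' : Fin n → ℝ) (h : a - a' ∈ Submodule.span ℝ τ) :
    {a} + τ - intrinsicInterior ℝ σ - C = {a'} + τ - intrinsicInterior ℝ σ - C := by
  obtain ⟨K, rfl⟩ := hC.exists_pointedCone
  rw [← hτ.coe_toPointedCone] at h
  obtain ⟨t₁, ht₁, t₂, ht₂, hsub⟩ := PointedCone.mem_span_iff_exists_sub.1 h
  exact singleton_add_sub_sub_eq_of_sub_eq (T := hτ.toPointedCone.toAddSubmonoid)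
    (K := K.toAddSubmonoid) hτ.1 _ ht₁ ht₂ hsub.symm

/-- The coprincipal downset `a + τ - σ° - C` depends only on the coset
`a + span τ`. -/
theorem coprincipal_well_defined {n : ℕ} (C τ σ : Set (Fin n → ℝ))
    (hC : IsPolyCone C) (hpointed : C ∩ (-C) = {0}) (hspan : C - C = Set.univ)
    (hτ : IsConeFace τ C) (hσ : IsConeFace σ C) (hts : τ ⊆ σ)
    (a a' : Fin n → ℝ) (h : a - a' ∈ Submodule.span ℝ τ) :
    {a} + τ - intrinsicInterior ℝ σ - C = {a'} + τ - intrinsicInterior ℝ σ - C :=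
  coprincipal_well_defined_general C τ σ hC hτ a a' h
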